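/- arXiv:1704.07192 — 5 statements merged into one kernel-verified Lean document; each statement's English description precedes it below -/
import Mathlib

section
/- Let A be a commutative noetherian ring and P a finitely generated projective A-module of constant rank 1. Then for every k ≥ 1, every permutation σ of {1,…,k}, and all elements m₁,…,m_k ∈ P, one has m₁ ⊗ m₂ ⊗ ⋯ ⊗ m_k = m_{σ(1)} ⊗ m_{σ(2)} ⊗ ⋯ ⊗ m_{σ(k)} in the k-fold tensor power P^{⊗k}. Consequently, the canonical quotient map P^{⊗k} → Sym^k_A P is an isomorphism of A-modules. -/
open PiTensorProduct

/-- The submodule of the `k`-th tensor power of `P` spanned by the differences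
`m₁ ⊗ ⋯ ⊗ m_k − m_{σ(1)} ⊗ ⋯ ⊗ m_{σ(k)}`; the `k`-th symmetric power is the quotient
of the tensor power by this submodule. -/
def symRel (A : Type*) [CommRing A] (P : Type*) [AddCommGroup P] [Module A P] (k : ℕ) :
    Submodule A (PiTensorProduct A (fun _ : Fin k => P)) :=
  Submodule.span A
    {x | ∃ (m : Fin k → P) (σ : Equiv.Perm (Fin k)), x = tprod A m - tprod A (m ∘ σ)}

/-- The `k`-th symmetric power `Sym^k_A P`, as the canonical quotient of the `k`-fold
tensor power `P^{⊗k}`. -/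
abbrev SymPow (A : Type*) [CommRing A] (P : Type*) [AddCommGroup P] [Module A P] (k : ℕ) :=
  PiTensorProduct A (fun _ : Fin k => P) ⧸ symRel A P k

/-!
Let `f : P → A` be linear. Locally `P ≅ A`, and for `P = A` one has
`f x • y = x * f 1 * y = f y • x`; equality in `P` is a local property, so `f x • y = f y • x`
holds globally. A projective module has a dual basis `(pᵢ, fᵢ)`; expanding one argument of a
bilinear map `B` in it gives `B x y = ∑ᵢ B (fᵢ y • x) pᵢ = ∑ᵢ B (fᵢ x • y) pᵢ = B y x`.
So every multilinear map on `P` is invariant under transpositions, hence under all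
permutations, and the relations defining `Sym^k_A P` already vanish in `P^{⊗k}`.
-/

open Function

section SmulComm

variable {A : Type*} [CommSemiring A] {P : Type*} [AddCommMonoid P] [Module A P]

theorem smul_comm_of_linearEquiv (e : P ≃ₗ[A] A) (f : P →ₗ[A] A) (x y : P) :
    f x • y = f y • x := by
  have hf : ∀ z, f z = e z * f (e.symm 1) := fun z => by
    rw [← smul_eq_mul, ← map_smul, ← map_smul, smul_eq_mul, mul_one, e.symm_apply_apply]
  apply e.injective
  rw [map_smul, map_smul, smul_eq_mul, smul_eq_mul, hf x, hf y]
  ring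

theorem smul_comm_of_localization_rank_one
    (hrank : ∀ (𝔪 : Ideal A) [𝔪.IsMaximal],
      Nonempty (LocalizedModule 𝔪.primeCompl P ≃ₗ[Localization 𝔪.primeCompl]
        Localization 𝔪.primeCompl))
    (f : P →ₗ[A] A) (x y : P) : f x • y = f y • x := by
  refine Module.eq_of_localization_maximal (R := A) (M := P)
    (fun 𝔪 _ => LocalizedModule 𝔪.primeCompl P)
    (fun 𝔪 _ => LocalizedModule.mkLinearMap 𝔪.primeCompl P) _ _ fun 𝔪 _ => ?_
  obtain ⟨e⟩ := hrank 𝔪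
  let toLoc := LocalizedModule.mkLinearMap 𝔪.primeCompl P
  let fₘ := IsLocalizedModule.mapExtendScalars 𝔪.primeCompl toLoc
    (Algebra.linearMap A (Localization 𝔪.primeCompl)) (Localization 𝔪.primeCompl) f
  have hfₘ (z : P) : fₘ (toLoc z) = algebraMap A _ (f z) := by
    rw [IsLocalizedModule.mapExtendScalars_apply_apply, IsLocalizedModule.map_apply]
    rfl
  simp only [map_smul, ← algebraMap_smul (Localization 𝔪.primeCompl) (f _), ← hfₘ]
  exact smul_comm_of_linearEquiv e fₘ _ _

end SmulComm

section Symmetric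

variable {A : Type*} [CommSemiring A] {P : Type*} [AddCommMonoid P] [Module A P]
  [Module.Projective A P] {N : Type*} [AddCommMonoid N] [Module A N]
  (h : ∀ (f : P →ₗ[A] A) (x y : P), f x • y = f y • x)
include h

theorem LinearMap.apply_comm_of_smul_comm (B : P →ₗ[A] P →ₗ[A] N) (x y : P) :
    B x y = B y x := by
  classical
  obtain ⟨s, hs⟩ := Module.Projective.out (R := A) (P := P)
  have expand : ∀ z, ∑ p ∈ (s z).support, s z p • p = z := fun z => by
    simpa [Finsupp.linearCombination_apply, Finsupp.sum] using hs z
  have coord_smul_comm : ∀ p, s y p • x = s x p • y := fun p => h (Finsupp.lapply p ∘ₗ s) y x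
  let t p := B (s y p • x) p
  -- `t p` vanishes when `s y p = 0`, and by `coord_smul_comm` also when `s x p = 0`.
  calc B x y = ∑ p ∈ (s y).support, t p := by
        conv_lhs => rw [← expand y]
        simp [t]
    _ = ∑ p ∈ (s x).support ∪ (s y).support, t p :=
        Finset.sum_subset Finset.subset_union_right fun p _ hp => by
          simp [t, Finsupp.notMem_support_iff.1 hp]
    _ = ∑ p ∈ (s x).support, t p := by
        refine (Finset.sum_subset Finset.subset_union_left fun p _ hp => ?_).symm
        simp [t, coord_smul_comm, Finsupp.notMem_support_iff.1 hp]
    _ = B y x := by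
        conv_rhs => rw [← expand x]
        simp [t, coord_smul_comm]

variable {ι : Type*} (g : MultilinearMap A (fun _ : ι => P) N) (m : ι → P)

theorem MultilinearMap.map_update_update_comm_of_smul_comm [DecidableEq ι] {i j : ι} (hij : i ≠ j)
    (x y : P) :
    g (update (update m i x) j y) = g (update (update m i y) j x) := by
  let B : P →ₗ[A] P →ₗ[A] N := LinearMap.mk₂ A (fun x y => g (update (update m i x) j y))
    (fun x x' y => by simp only [update_comm hij _ _ m, g.map_update_add])
    (fun c x y => by simp only [update_comm hij _ _ m, g.map_update_smul])
    (fun x y y' => g.map_update_add _ j y y')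
    (fun c x y => g.map_update_smul _ j c y)
  exact LinearMap.apply_comm_of_smul_comm h B x y

theorem MultilinearMap.map_comp_swap_of_smul_comm [DecidableEq ι] (i j : ι) :
    g (m ∘ Equiv.swap i j) = g m := by
  rcases eq_or_ne i j with rfl | hij
  · simp
  rw [Equiv.comp_swap_eq_update, g.map_update_update_comm_of_smul_comm h m hij.symm]
  simp

theorem MultilinearMap.map_comp_perm_of_smul_comm [Finite ι] (σ : Equiv.Perm ι) :
    g (m ∘ σ) = g m := by
  classical
  induction σ using Equiv.Perm.swap_induction_on' generalizing m with
  | one => rfl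
  | mul_swap σ i j _ ih =>
    rw [Equiv.Perm.coe_mul, ← comp_assoc, g.map_comp_swap_of_smul_comm h, ih]

end Symmetric

theorem tensorPower_perm_invariant_of_rank_one_general
    (A : Type*) [CommRing A]
    (P : Type*) [AddCommGroup P] [Module A P] [Module.Projective A P]
    (hrank : ∀ (𝔭 : Ideal A) [𝔭.IsPrime],
      Nonempty (LocalizedModule 𝔭.primeCompl P ≃ₗ[Localization 𝔭.primeCompl]
        Localization 𝔭.primeCompl))
    (k : ℕ) :
    (∀ (σ : Equiv.Perm (Fin k)) (m : Fin k → P), tprod A m = tprod A (m ∘ σ)) ∧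
      Function.Bijective (symRel A P k).mkQ := by
  have hsmul := smul_comm_of_localization_rank_one fun 𝔪 _ => hrank 𝔪
  have hperm (σ : Equiv.Perm (Fin k)) (m : Fin k → P) :
      PiTensorProduct.tprod A m = PiTensorProduct.tprod A (m ∘ σ) :=
    ((PiTensorProduct.tprod A).map_comp_perm_of_smul_comm hsmul m σ).symm
  have hrel : symRel A P k = ⊥ := by
    rw [symRel, Submodule.span_eq_bot]
    rintro _ ⟨m, σ, rfl⟩
    exact sub_eq_zero.2 (hperm σ m)
  refine ⟨hperm, ?_, Submodule.mkQ_surjective _⟩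
  rw [← LinearMap.ker_eq_bot, Submodule.ker_mkQ, hrel]

/-- Let `A` be a commutative noetherian ring and `P` a finitely generated
projective `A`-module of constant rank `1` (i.e. `P_𝔭 ≅ A_𝔭` for every prime `𝔭`).  Then for
every `k ≥ 1`, every permutation `σ` of `Fin k` and all `m₁, …, m_k ∈ P` one has
`m₁ ⊗ ⋯ ⊗ m_k = m_{σ(1)} ⊗ ⋯ ⊗ m_{σ(k)}` in `P^{⊗k}`; consequently the canonical quotient
map `P^{⊗k} → Sym^k_A P` is an isomorphism (it is a bijection). -/
theorem tensorPower_perm_invariant_of_rank_one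
    (A : Type*) [CommRing A] [IsNoetherianRing A]
    (P : Type*) [AddCommGroup P] [Module A P] [Module.Finite A P] [Module.Projective A P]
    (hrank : ∀ (𝔭 : Ideal A) [𝔭.IsPrime],
      Nonempty (LocalizedModule 𝔭.primeCompl P ≃ₗ[Localization 𝔭.primeCompl]
        Localization 𝔭.primeCompl))
    (k : ℕ) (hk : 1 ≤ k) :
    (∀ (σ : Equiv.Perm (Fin k)) (m : Fin k → P), tprod A m = tprod A (m ∘ σ)) ∧
      Function.Bijective (symRel A P k).mkQ :=
  tensorPower_perm_invariant_of_rank_one_general A P hrank k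
end

section
/- Let N ≥ 2, V = ℂ^N with basis v₁,…,v_N and dual basis f₁,…,f_N of V*, and A a commutative noetherian ℂ-algebra. Let P be a finitely generated projective A-module of constant rank 1, α : P → V ⊗_ℂ A a split injective A-linear map, and β : P^∨ → V* ⊗_ℂ A an A-linear map with α^∨ ∘ β = 0. Define, on W_k := Sym^k_A P^∨ (0 ≤ k ≤ N−1), for f ∈ V* the raising map W_k → W_{k+1}, u¹⋯u^k ↦ α^∨(f)·u¹⋯u^k, and for v ∈ V the contraction map W_k → W_{k−1}, u¹⋯u^k ↦ u¹(β^∨(v))·u²⋯u^k. Then these maps satisfy: (1) the maps for any two f, f' ∈ V* commute and the maps for any two v, v' ∈ V commute; (2) for all i, j, the composite maps f_i ∘ v_j and v_j ∘ f_i on W_k are both equal to multiplication by the scalar a_{ij} := (α^∨ f_i)(β^∨ v_j) ∈ A; (3) ∑_{i=1}^N f_i ∘ v_i = 0 = ∑_{i=1}^N v_i ∘ f_i as maps W_k → W_k. -/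
/-!
Raising by `f` is multiplication by the fixed element `α^∨ f` of `P^∨`, and lowering by `v` is
contraction against a fixed functional, so commutativity of `Sym_A P^∨` gives (1). For (2),
`vⱼ ∘ fᵢ` is visibly multiplication by `a_{ij}`, while `fᵢ ∘ vⱼ` sends `u¹⋯u^k` to
`β(u¹)ⱼ • (α^∨ fᵢ) u²⋯u^k`; it equals `a_{ij} • u¹⋯u^k` because `β(p)ⱼ • q = β(q)ⱼ • p` in `P^∨`.
That identity is where rank one enters: after localizing, where `P ≅ A`, all minors
`f x · f' y − f y · f' x` vanish, and `P^∨` is spanned by the coordinate forms `prₗ ∘ α` since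
`α` is split. Finally (3) is `(∑ᵢ a_{ii}) • id`, and the trace `∑ᵢ a_{ii}` vanishes because
`α^∨ ∘ β = 0`.
-/

open PiTensorProduct

/-- The image `u¹ ⋯ u^k` of `u¹ ⊗ ⋯ ⊗ u^k` in the symmetric power `Sym^k_A P`. -/
noncomputable def mkSym (A : Type*) [CommRing A] {P : Type*} [AddCommGroup P] [Module A P]
    {k : ℕ} (m : Fin k → P) : SymPow A P k :=
  (symRel A P k).mkQ (tprod A m)

namespace SymPow

variable {A : Type*} [CommRing A] {Q : Type*} [AddCommGroup Q] [Module A Q] {k : ℕ}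

theorem mkSym_comp_perm (m : Fin k → Q) (σ : Equiv.Perm (Fin k)) :
    mkSym A (m ∘ σ) = mkSym A m :=
  ((Submodule.Quotient.eq _).2 (Submodule.subset_span (by exact ⟨m, σ, rfl⟩))).symm

theorem mkSym_cons_cons_comm (a b : Q) (u : Fin k → Q) :
    mkSym A (Fin.cons a (Fin.cons b u)) = mkSym A (Fin.cons b (Fin.cons a u)) := by
  rw [← mkSym_comp_perm _ (Equiv.swap 0 1)]
  exact congrArg (mkSym A) (Matrix.cons_cons_comp_swap_zero_one a b u)

theorem mkSym_cons_smul (c : A) (a : Q) (u : Fin k → Q) :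
    mkSym A (Fin.cons (c • a) u) = c • mkSym A (Fin.cons a u) := by
  have h : (Fin.cons (c • a) u : Fin (k + 1) → Q) = Function.update (Fin.cons a u) 0 (c • a) :=
    (Fin.update_cons_zero ..).symm
  rw [mkSym, mkSym, h, MultilinearMap.map_update_smul, map_smul, Fin.update_cons_zero]

theorem hom_ext {M : Type*} [AddCommGroup M] [Module A M] {f g : SymPow A Q k →ₗ[A] M}
    (h : ∀ m : Fin k → Q, f (mkSym A m) = g (mkSym A m)) : f = g :=
  Submodule.linearMap_qext _ (PiTensorProduct.ext (MultilinearMap.ext h))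

def IsMulLeft (a : Q) (F : SymPow A Q k →ₗ[A] SymPow A Q (k + 1)) : Prop :=
  ∀ u, F (mkSym A u) = mkSym A (Fin.cons a u)

def IsContraction (φ : Q → A) (L : SymPow A Q (k + 1) →ₗ[A] SymPow A Q k) : Prop :=
  ∀ u, L (mkSym A u) = φ (u 0) • mkSym A (u ∘ Fin.succ)

theorem IsContraction.apply_mkSym_cons {φ : Q → A} {L : SymPow A Q (k + 1) →ₗ[A] SymPow A Q k}
    (hL : IsContraction φ L) (a : Q) (u : Fin k → Q) :
    L (mkSym A (Fin.cons a u)) = φ a • mkSym A u := by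
  rw [hL, Fin.cons_zero, Fin.cons_comp_succ]

variable {a b : Q} {φ ψ : Q → A}

theorem IsMulLeft.comp_comm {F G : SymPow A Q k →ₗ[A] SymPow A Q (k + 1)}
    {F' G' : SymPow A Q (k + 1) →ₗ[A] SymPow A Q (k + 2)} (hF : IsMulLeft a F)
    (hF' : IsMulLeft a F') (hG : IsMulLeft b G) (hG' : IsMulLeft b G') :
    F'.comp G = G'.comp F :=
  hom_ext fun u => by
    rw [LinearMap.comp_apply, LinearMap.comp_apply, hG, hF', hF, hG', mkSym_cons_cons_comm]

theorem IsContraction.comp_comm {L M : SymPow A Q (k + 2) →ₗ[A] SymPow A Q (k + 1)}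
    {L' M' : SymPow A Q (k + 1) →ₗ[A] SymPow A Q k} (hL : IsContraction φ L)
    (hL' : IsContraction φ L') (hM : IsContraction ψ M) (hM' : IsContraction ψ M') :
    L'.comp M = M'.comp L := by
  refine hom_ext fun u => ?_
  rw [← Fin.cons_self_tail u, ← Fin.cons_self_tail (Fin.tail u), LinearMap.comp_apply,
    LinearMap.comp_apply, hM.apply_mkSym_cons, map_smul, hL'.apply_mkSym_cons,
    mkSym_cons_cons_comm, hL.apply_mkSym_cons, map_smul, hM'.apply_mkSym_cons, smul_smul,
    smul_smul, mul_comm]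

theorem IsMulLeft.comp_isContraction {F : SymPow A Q k →ₗ[A] SymPow A Q (k + 1)}
    {L : SymPow A Q (k + 1) →ₗ[A] SymPow A Q k} (hF : IsMulLeft a F) (hL : IsContraction φ L)
    (hφ : ∀ p, φ p • a = φ a • p) : F.comp L = φ a • LinearMap.id := by
  refine hom_ext fun u => ?_
  rw [← Fin.cons_self_tail u, LinearMap.comp_apply, hL.apply_mkSym_cons, map_smul, hF,
    ← mkSym_cons_smul, hφ, mkSym_cons_smul]
  rfl

theorem IsContraction.comp_isMulLeft {F : SymPow A Q k →ₗ[A] SymPow A Q (k + 1)}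
    {L : SymPow A Q (k + 1) →ₗ[A] SymPow A Q k} (hF : IsMulLeft a F) (hL : IsContraction φ L) :
    L.comp F = φ a • LinearMap.id :=
  hom_ext fun u => by rw [LinearMap.comp_apply, hF, hL.apply_mkSym_cons]; rfl

end SymPow

namespace Module.Dual

variable {A : Type*} [CommRing A] {P : Type*} [AddCommGroup P] [Module A P]

theorem mul_apply_comm_of_linearEquiv (e : P ≃ₗ[A] A) (f f' : Dual A P) (x y : P) :
    f x * f' y = f y * f' x := by
  have h (g : Dual A P) (z : P) : g z = e z * g (e.symm 1) := by
    rw [← smul_eq_mul, ← map_smul, ← map_smul, smul_eq_mul, mul_one, e.symm_apply_apply]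
  rw [h f x, h f' y, h f y, h f' x]
  ring

theorem mul_apply_comm_of_localization
    (hP : ∀ (𝔭 : Ideal A) [𝔭.IsPrime],
      Nonempty (LocalizedModule 𝔭.primeCompl P ≃ₗ[Localization 𝔭.primeCompl]
        Localization 𝔭.primeCompl))
    (f f' : Dual A P) (x y : P) : f x * f' y = f y * f' x := by
  rw [← sub_eq_zero]
  refine eq_zero_of_localization _ fun J _ => ?_
  obtain ⟨e⟩ := hP J
  let S := J.primeCompl
  let mkP := LocalizedModule.mkLinearMap S P
  let loc (g : Dual A P) : Dual (Localization S) (LocalizedModule S P) :=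
    LinearMap.extendScalarsOfIsLocalization S (Localization S)
      (IsLocalizedModule.map S mkP (Algebra.linearMap A (Localization S)) g)
  have hloc (g : Dual A P) (z : P) : algebraMap A _ (g z) = loc g (mkP z) :=
    (IsLocalizedModule.map_apply S mkP (Algebra.linearMap A (Localization S)) g z).symm
  rw [map_sub, map_mul, map_mul, hloc f, hloc f', hloc f, hloc f', sub_eq_zero]
  exact mul_apply_comm_of_linearEquiv e _ _ _ _

variable {ι : Type*} [Fintype ι] [DecidableEq ι] {α : P →ₗ[A] (ι → A)} {ρ : (ι → A) →ₗ[A] P}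

theorem eq_sum_of_comp_eq_id (hρ : ρ ∘ₗ α = LinearMap.id) (p : Dual A P) :
    p = ∑ l, p (ρ (Pi.single l 1)) • (LinearMap.proj l ∘ₗ α) := by
  ext x
  have hx : ρ (α x) = x := LinearMap.congr_fun hρ x
  conv_lhs => rw [← hx, pi_eq_sum_univ' (α x)]
  simp [map_sum, map_smul, mul_comm]

theorem apply_smul_comm (hP : ∀ (f f' : Dual A P) (x y : P), f x * f' y = f y * f' x)
    (hρ : ρ ∘ₗ α = LinearMap.id) (φ : Dual A P →ₗ[A] A) (p q : Dual A P) :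
    φ p • q = φ q • p := by
  have hφ (r : Dual A P) : φ r = ∑ l, r (ρ (Pi.single l 1)) * φ (LinearMap.proj l ∘ₗ α) := by
    conv_lhs => rw [eq_sum_of_comp_eq_id hρ r]
    simp [map_sum, map_smul]
  ext x
  rw [LinearMap.smul_apply, LinearMap.smul_apply, hφ p, hφ q, smul_eq_mul, smul_eq_mul,
    Finset.sum_mul, Finset.sum_mul]
  refine Finset.sum_congr rfl fun l _ => ?_
  rw [mul_right_comm, hP p q]
  ring

theorem sum_apply_proj_comp_eq_zero (hρ : ρ ∘ₗ α = LinearMap.id) (β : Dual A P →ₗ[A] (ι → A))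
    (hβ : ∀ u p, ∑ i, β u i * α p i = 0) : ∑ i, β (LinearMap.proj i ∘ₗ α) i = 0 :=
  calc ∑ i, β (LinearMap.proj i ∘ₗ α) i
      = ∑ i, ∑ l, α (ρ (Pi.single l 1)) i * β (LinearMap.proj l ∘ₗ α) i := by
        refine Finset.sum_congr rfl fun i _ => ?_
        conv_lhs => rw [eq_sum_of_comp_eq_id hρ (LinearMap.proj i ∘ₗ α)]
        simp [map_sum, map_smul]
    _ = ∑ l, ∑ i, β (LinearMap.proj l ∘ₗ α) i * α (ρ (Pi.single l 1)) i := by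
        rw [Finset.sum_comm]
        simp only [mul_comm]
    _ = 0 := Finset.sum_eq_zero fun l _ => hβ _ _

end Module.Dual

theorem quiver_relations_for_rank_one_triple_general
    (n : ℕ) (A : Type*) [CommRing A] [Algebra ℂ A]
    (P : Type*) [AddCommGroup P] [Module A P]
    (hrank : ∀ (𝔭 : Ideal A) [𝔭.IsPrime],
      Nonempty (LocalizedModule 𝔭.primeCompl P ≃ₗ[Localization 𝔭.primeCompl]
        Localization 𝔭.primeCompl))
    (α : P →ₗ[A] (Fin (n + 2) → A))
    (hα : ∃ ρ : (Fin (n + 2) → A) →ₗ[A] P, ρ.comp α = LinearMap.id)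
    (β : Module.Dual A P →ₗ[A] (Fin (n + 2) → A))
    (hβ : ∀ (u : Module.Dual A P) (p : P), ∑ i, β u i * α p i = 0)
    -- the raising maps `f : W_k → W_{k+1}` (for `f ∈ V^*` with coordinates `c`)
    (raise : (Fin (n + 2) → ℂ) → ∀ k : Fin (n + 1),
      SymPow A (Module.Dual A P) k.val →ₗ[A] SymPow A (Module.Dual A P) (k.val + 1))
    (hraise : ∀ (c : Fin (n + 2) → ℂ) (k : Fin (n + 1)) (u : Fin k.val → Module.Dual A P),
      raise c k (mkSym A u) =
        mkSym A (Fin.cons (∑ i, algebraMap ℂ A (c i) • ((LinearMap.proj i).comp α)) u))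
    -- the lowering maps `v : W_{k+1} → W_k` (for `v ∈ V` with coordinates `c`)
    (lower : (Fin (n + 2) → ℂ) → ∀ k : Fin (n + 1),
      SymPow A (Module.Dual A P) (k.val + 1) →ₗ[A] SymPow A (Module.Dual A P) k.val)
    (hlower : ∀ (c : Fin (n + 2) → ℂ) (k : Fin (n + 1))
        (u : Fin (k.val + 1) → Module.Dual A P),
      lower c k (mkSym A u) =
        (∑ j, algebraMap ℂ A (c j) * β (u 0) j) • mkSym A (u ∘ Fin.succ)) :
    -- (1) raising maps commute, lowering maps commute
    (∀ (c c' : Fin (n + 2) → ℂ) (k : Fin n),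
      (raise c' k.succ).comp (raise c k.castSucc) = (raise c k.succ).comp (raise c' k.castSucc)) ∧
    (∀ (c c' : Fin (n + 2) → ℂ) (k : Fin n),
      (lower c' k.castSucc).comp (lower c k.succ) = (lower c k.castSucc).comp (lower c' k.succ)) ∧
    -- (2) `fᵢ ∘ vⱼ` and `vⱼ ∘ fᵢ` are multiplication by `a_{ij} = (α^∨ fᵢ)(β^∨ vⱼ)`
    (∀ (i j : Fin (n + 2)) (k : Fin (n + 1)),
      (raise (Pi.single i 1) k).comp (lower (Pi.single j 1) k) =
        β ((LinearMap.proj i).comp α) j • LinearMap.id ∧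
      (lower (Pi.single j 1) k).comp (raise (Pi.single i 1) k) =
        β ((LinearMap.proj i).comp α) j • LinearMap.id) ∧
    -- (3) `∑ᵢ fᵢ ∘ vᵢ = 0 = ∑ᵢ vᵢ ∘ fᵢ`
    (∀ k : Fin (n + 1),
      ∑ i, (raise (Pi.single i 1) k).comp (lower (Pi.single i 1) k) = 0 ∧
      ∑ i, (lower (Pi.single i 1) k).comp (raise (Pi.single i 1) k) = 0) := by
  obtain ⟨ρ, hρ⟩ := hα
  set g : Fin (n + 2) → Module.Dual A P := fun i => LinearMap.proj i ∘ₗ α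
  have hraise_single (i : Fin (n + 2)) (k : Fin (n + 1)) :
      SymPow.IsMulLeft (g i) (raise (Pi.single i 1) k) := fun u => by
    rw [hraise]
    simp [g, Pi.single_apply, apply_ite (algebraMap ℂ A), ite_smul]
  have hlower' (c : Fin (n + 2) → ℂ) (k : Fin (n + 1)) :
      SymPow.IsContraction (fun u => ∑ j, algebraMap ℂ A (c j) * β u j) (lower c k) :=
    hlower c k
  have hlower_single (j : Fin (n + 2)) (k : Fin (n + 1)) :
      SymPow.IsContraction (fun u => β u j) (lower (Pi.single j 1) k) := fun u => by
    rw [hlower]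
    simp [Pi.single_apply, apply_ite (algebraMap ℂ A), ite_mul]
  have hswap (j : Fin (n + 2)) (p q : Module.Dual A P) : β p j • q = β q j • p :=
    Module.Dual.apply_smul_comm (Module.Dual.mul_apply_comm_of_localization hrank) hρ
      (LinearMap.proj j ∘ₗ β) p q
  have hraise_lower (i j : Fin (n + 2)) (k : Fin (n + 1)) :=
    (hraise_single i k).comp_isContraction (hlower_single j k) fun p => hswap j p (g i)
  have hlower_raise (i j : Fin (n + 2)) (k : Fin (n + 1)) :=
    (hlower_single j k).comp_isMulLeft (hraise_single i k)
  have htrace : ∑ i, β (g i) i = 0 := Module.Dual.sum_apply_proj_comp_eq_zero hρ β hβ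
  refine ⟨fun c c' k => ?_, fun c c' k => ?_,
    fun i j k => ⟨hraise_lower i j k, hlower_raise i j k⟩, fun k => ?_⟩
  · exact SymPow.IsMulLeft.comp_comm (hraise c' k.castSucc) (hraise c' k.succ)
      (hraise c k.castSucc) (hraise c k.succ)
  · exact SymPow.IsContraction.comp_comm (hlower' c' k.succ) (hlower' c' k.castSucc)
      (hlower' c k.succ) (hlower' c k.castSucc)
  · simp only [hraise_lower, hlower_raise, ← Finset.sum_smul, htrace, zero_smul, and_self]

/-- `N = n + 2 ≥ 2`, `V = ℂ^N` with standard basis `v₁,…,v_N` and dual basis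
`f₁,…,f_N`; `A` is a commutative noetherian `ℂ`-algebra; `P` is a finitely generated projective
`A`-module of constant rank one; `α : P → V ⊗_ℂ A ≅ A^N` is a split injective `A`-linear map
and `β : P^∨ → V^* ⊗_ℂ A ≅ A^N` (coordinates with respect to the dual basis, so that
`β u j = β(u)(v_j) = u(β^∨ v_j)`) is an `A`-linear map with `α^∨ ∘ β = 0`.  On
`W_k := Sym^k_A P^∨` (`0 ≤ k ≤ N−1`) consider the raising maps (for `f = ∑ cᵢ fᵢ ∈ V^*`)
`u¹⋯u^k ↦ α^∨(f)·u¹⋯u^k` where `α^∨(f) = ∑ cᵢ • (fᵢ ∘ α) ∈ P^∨`, and the lowering maps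
(for `v = ∑ cⱼ vⱼ ∈ V`) `u¹⋯u^k ↦ u¹(β^∨(v))·u²⋯u^k = (∑ cⱼ β(u¹)ⱼ)·u²⋯u^k`.
Then: (1) any two raising maps commute and any two lowering maps commute;
(2) the composites `fᵢ ∘ vⱼ` and `vⱼ ∘ fᵢ` are both multiplication by the scalar
`a_{ij} = (α^∨ fᵢ)(β^∨ vⱼ) ∈ A`; (3) `∑ᵢ fᵢ ∘ vᵢ = 0 = ∑ᵢ vᵢ ∘ fᵢ`. -/
theorem quiver_relations_for_rank_one_triple
    (n : ℕ) (A : Type*) [CommRing A] [IsNoetherianRing A] [Algebra ℂ A]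
    (P : Type*) [AddCommGroup P] [Module A P] [Module.Finite A P] [Module.Projective A P]
    (hrank : ∀ (𝔭 : Ideal A) [𝔭.IsPrime],
      Nonempty (LocalizedModule 𝔭.primeCompl P ≃ₗ[Localization 𝔭.primeCompl]
        Localization 𝔭.primeCompl))
    (α : P →ₗ[A] (Fin (n + 2) → A))
    (hα : ∃ ρ : (Fin (n + 2) → A) →ₗ[A] P, ρ.comp α = LinearMap.id)
    (β : Module.Dual A P →ₗ[A] (Fin (n + 2) → A))
    (hβ : ∀ (u : Module.Dual A P) (p : P), ∑ i, β u i * α p i = 0)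
    -- the raising maps `f : W_k → W_{k+1}` (for `f ∈ V^*` with coordinates `c`)
    (raise : (Fin (n + 2) → ℂ) → ∀ k : Fin (n + 1),
      SymPow A (Module.Dual A P) k.val →ₗ[A] SymPow A (Module.Dual A P) (k.val + 1))
    (hraise : ∀ (c : Fin (n + 2) → ℂ) (k : Fin (n + 1)) (u : Fin k.val → Module.Dual A P),
      raise c k (mkSym A u) =
        mkSym A (Fin.cons (∑ i, algebraMap ℂ A (c i) • ((LinearMap.proj i).comp α)) u))
    -- the lowering maps `v : W_{k+1} → W_k` (for `v ∈ V` with coordinates `c`)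
    (lower : (Fin (n + 2) → ℂ) → ∀ k : Fin (n + 1),
      SymPow A (Module.Dual A P) (k.val + 1) →ₗ[A] SymPow A (Module.Dual A P) k.val)
    (hlower : ∀ (c : Fin (n + 2) → ℂ) (k : Fin (n + 1))
        (u : Fin (k.val + 1) → Module.Dual A P),
      lower c k (mkSym A u) =
        (∑ j, algebraMap ℂ A (c j) * β (u 0) j) • mkSym A (u ∘ Fin.succ)) :
    -- (1) raising maps commute, lowering maps commute
    (∀ (c c' : Fin (n + 2) → ℂ) (k : Fin n),
      (raise c' k.succ).comp (raise c k.castSucc) = (raise c k.succ).comp (raise c' k.castSucc)) ∧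
    (∀ (c c' : Fin (n + 2) → ℂ) (k : Fin n),
      (lower c' k.castSucc).comp (lower c k.succ) = (lower c k.castSucc).comp (lower c' k.succ)) ∧
    -- (2) `fᵢ ∘ vⱼ` and `vⱼ ∘ fᵢ` are multiplication by `a_{ij} = (α^∨ fᵢ)(β^∨ vⱼ)`
    (∀ (i j : Fin (n + 2)) (k : Fin (n + 1)),
      (raise (Pi.single i 1) k).comp (lower (Pi.single j 1) k) =
        β ((LinearMap.proj i).comp α) j • LinearMap.id ∧
      (lower (Pi.single j 1) k).comp (raise (Pi.single i 1) k) =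
        β ((LinearMap.proj i).comp α) j • LinearMap.id) ∧
    -- (3) `∑ᵢ fᵢ ∘ vᵢ = 0 = ∑ᵢ vᵢ ∘ fᵢ`
    (∀ k : Fin (n + 1),
      ∑ i, (raise (Pi.single i 1) k).comp (lower (Pi.single i 1) k) = 0 ∧
      ∑ i, (lower (Pi.single i 1) k).comp (raise (Pi.single i 1) k) = 0) :=
  quiver_relations_for_rank_one_triple_general n A P hrank α hα β hβ raise hraise lower hlower
end

section
/- Let N ≥ 2, V = ℂ^N, and let W be a representation of the double Beilinson quiver with relations over ℂ in which each W_k is one-dimensional, W₀ = ℂ, and W is generated by W₀. Then W is simple (i.e., its only subrepresentations are 0 and W) if and only if W is generated by its last component W_{N−1}, i.e., the smallest subrepresentation of W containing W_{N−1} is W itself. -/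
/-!
All components are simple modules, so a subrepresentation is `0` or everything in each slot.
If `W` is generated by `W₀` and `W_{N-1} ≠ 0`, no raising level `W_j → W_{j+1}` vanishes
identically: otherwise the family that is everything in the slots `≤ j` and `0` above would be
a subrepresentation containing `W₀` but not `W_{N-1}`. Hence a subrepresentation vanishing at
the top vanishes in every slot, by descending induction, while one that is everything at the
top is everything by generation from `W_{N-1}`.
-/

namespace DoubleBeilinson

variable {K ι : Type*} [Field K] {n : ℕ} {W : Fin (n + 2) → Type*}
  [∀ k, AddCommGroup (W k)] [∀ k, Module K (W k)]
  (raise : ι → ∀ k : Fin (n + 1), W k.castSucc →ₗ[K] W k.succ)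
  (lower : ι → ∀ k : Fin (n + 1), W k.succ →ₗ[K] W k.castSucc)

def IsStable (W' : ∀ k, Submodule K (W k)) : Prop :=
  ∀ (c : ι) (k : Fin (n + 1)),
    (W' k.castSucc).map (raise c k) ≤ W' k.succ ∧ (W' k.succ).map (lower c k) ≤ W' k.castSucc

def IsSimple : Prop :=
  ∀ W' : ∀ k, Submodule K (W k), IsStable raise lower W' → (∀ k, W' k = ⊥) ∨ (∀ k, W' k = ⊤)

def IsGeneratedBy (i : Fin (n + 2)) : Prop :=
  ∀ W' : ∀ k, Submodule K (W k), IsStable raise lower W' → W' i = ⊤ → ∀ k, W' k = ⊤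

variable {raise lower}

theorem IsSimple.isGeneratedBy (hW : IsSimple raise lower) (i : Fin (n + 2))
    [Nontrivial (W i)] : IsGeneratedBy raise lower i := fun W' hW' hi =>
  (hW W' hW').resolve_left fun hbot => bot_ne_top ((hbot i).symm.trans hi)

theorem IsStable.raise_eq_zero {W' : ∀ k, Submodule K (W k)} (hW' : IsStable raise lower W')
    {j : Fin (n + 1)} (htop : W' j.castSucc = ⊤) (hbot : W' j.succ = ⊥) (c : ι) :
    raise c j = 0 := by
  have h := (hW' c j).1
  rwa [htop, hbot, Submodule.map_top, le_bot_iff, LinearMap.range_eq_bot] at h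

def truncation (j : Fin (n + 1)) (k : Fin (n + 2)) : Submodule K (W k) :=
  if k ≤ j.castSucc then ⊤ else ⊥

theorem isStable_truncation {j : Fin (n + 1)} (hj : ∀ c, raise c j = 0) :
    IsStable raise lower (truncation j) := by
  intro c m
  constructor
  · by_cases hmj : m < j
    · simp [truncation, Fin.succ_le_castSucc_iff.mpr hmj]
    · rcases eq_or_ne m j with rfl | hne
      · simp [hj c]
      · have : ¬ m ≤ j := fun h => hne (h.antisymm (not_lt.mp hmj))
        simp [truncation, this]
  · by_cases hmj : m < j
    · simp [truncation, hmj.le]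
    · simp [truncation, Fin.succ_le_castSucc_iff, hmj]

theorem IsGeneratedBy.exists_raise_ne_zero (hgen : IsGeneratedBy raise lower 0)
    [Nontrivial (W (Fin.last (n + 1)))] (j : Fin (n + 1)) : ∃ c, raise c j ≠ 0 := by
  by_contra! hj
  have hlast := hgen _ (isStable_truncation hj) (by simp [truncation]) (Fin.last (n + 1))
  have : ¬ Fin.last (n + 1) ≤ j.castSucc := not_le.mpr (Fin.castSucc_lt_last j)
  simp [truncation, this] at hlast

theorem IsGeneratedBy.isSimple [∀ k, IsSimpleModule K (W k)]
    (hgen : IsGeneratedBy raise lower 0) (hlast : IsGeneratedBy raise lower (Fin.last (n + 1))) :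
    IsSimple raise lower := by
  intro W' hW'
  have := IsSimpleModule.nontrivial K (W (Fin.last (n + 1)))
  rcases eq_bot_or_eq_top (W' (Fin.last (n + 1))) with hbot | htop
  · left
    intro k
    induction k using Fin.reverseInduction with
    | last => exact hbot
    | cast j ih =>
      refine (eq_bot_or_eq_top (W' j.castSucc)).resolve_right fun htop => ?_
      obtain ⟨c, hc⟩ := hgen.exists_raise_ne_zero j
      exact hc (hW'.raise_eq_zero htop ih c)
  · exact Or.inr (hlast W' hW' htop)

end DoubleBeilinson

theorem simple_iff_generated_by_last_component_general
    (n : ℕ)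
    (W : Fin (n + 2) → Type*) [∀ k, AddCommGroup (W k)] [∀ k, Module ℂ (W k)]
    (raise : (Fin (n + 2) → ℂ) → ∀ k : Fin (n + 1), W k.castSucc →ₗ[ℂ] W k.succ)
    (lower : (Fin (n + 2) → ℂ) → ∀ k : Fin (n + 1), W k.succ →ₗ[ℂ] W k.castSucc)
    (hdim : ∀ k, Module.finrank ℂ (W k) = 1)
    (hgen : ∀ (W' : ∀ k : Fin (n + 2), Submodule ℂ (W k)),
      (∀ (c : Fin (n + 2) → ℂ) (k : Fin (n + 1)),
        (W' k.castSucc).map (raise c k) ≤ W' k.succ ∧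
        (W' k.succ).map (lower c k) ≤ W' k.castSucc) →
      W' 0 = ⊤ → ∀ k, W' k = ⊤) :
    -- `W` is simple …
    (∀ (W' : ∀ k : Fin (n + 2), Submodule ℂ (W k)),
      (∀ (c : Fin (n + 2) → ℂ) (k : Fin (n + 1)),
        (W' k.castSucc).map (raise c k) ≤ W' k.succ ∧
        (W' k.succ).map (lower c k) ≤ W' k.castSucc) →
      (∀ k, W' k = ⊥) ∨ (∀ k, W' k = ⊤)) ↔
    -- … iff `W` is generated by its last component `W_{N−1}`
    (∀ (W' : ∀ k : Fin (n + 2), Submodule ℂ (W k)),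
      (∀ (c : Fin (n + 2) → ℂ) (k : Fin (n + 1)),
        (W' k.castSucc).map (raise c k) ≤ W' k.succ ∧
        (W' k.succ).map (lower c k) ≤ W' k.castSucc) →
      W' (Fin.last (n + 1)) = ⊤ → ∀ k, W' k = ⊤) := by
  have : ∀ k, IsSimpleModule ℂ (W k) := fun k => isSimpleModule_iff_finrank_eq_one.mpr (hdim k)
  have : Nontrivial (W (Fin.last (n + 1))) := IsSimpleModule.nontrivial ℂ _
  exact ⟨fun hW => DoubleBeilinson.IsSimple.isGeneratedBy hW _,
    DoubleBeilinson.IsGeneratedBy.isSimple hgen⟩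

/-- `N = n + 2 ≥ 2`, `V = ℂ^N`.  Let `W` be a representation of the
double Beilinson quiver with relations over `ℂ` (raising maps for `f ∈ V^*`, lowering maps
for `v ∈ V`, `ℂ`-linear in `f` resp. `v`, satisfying the commutation, mixed and
`∑ fᵢvᵢ = 0 = ∑ vᵢfᵢ` relations) in which each `W_k` is one-dimensional, `W₀ = ℂ` and `W`
is generated by `W₀`.  Then `W` is simple (every stable family of subspaces is `0` or all
of `W`) if and only if `W` is generated by its last component `W_{N−1}` (every stable family
of subspaces which is everything in the last slot is all of `W`). -/
theorem simple_iff_generated_by_last_component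
    (n : ℕ)
    (W : Fin (n + 2) → Type*) [∀ k, AddCommGroup (W k)] [∀ k, Module ℂ (W k)]
    (raise : (Fin (n + 2) → ℂ) → ∀ k : Fin (n + 1), W k.castSucc →ₗ[ℂ] W k.succ)
    (lower : (Fin (n + 2) → ℂ) → ∀ k : Fin (n + 1), W k.succ →ₗ[ℂ] W k.castSucc)
    (raise_add : ∀ c c' k, raise (c + c') k = raise c k + raise c' k)
    (raise_smul : ∀ (t : ℂ) c k, raise (t • c) k = t • raise c k)
    (lower_add : ∀ c c' k, lower (c + c') k = lower c k + lower c' k)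
    (lower_smul : ∀ (t : ℂ) c k, lower (t • c) k = t • lower c k)
    (raise_comm : ∀ c c' (k : Fin n),
      (raise c' k.succ).comp (raise c k.castSucc) = (raise c k.succ).comp (raise c' k.castSucc))
    (lower_comm : ∀ c c' (k : Fin n),
      (lower c' k.castSucc).comp (lower c k.succ) = (lower c k.castSucc).comp (lower c' k.succ))
    (mixed_comm : ∀ c c' (k : Fin n),
      (raise c k.castSucc).comp (lower c' k.castSucc) = (lower c' k.succ).comp (raise c k.succ))
    (sum_fv : ∀ k : Fin (n + 1),
      ∑ i, (raise (Pi.single i 1) k).comp (lower (Pi.single i 1) k) = 0)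
    (sum_vf : ∀ k : Fin (n + 1),
      ∑ i, (lower (Pi.single i 1) k).comp (raise (Pi.single i 1) k) = 0)
    (hdim : ∀ k, Module.finrank ℂ (W k) = 1)
    (hW0 : Nonempty (W 0 ≃ₗ[ℂ] ℂ))
    (hgen : ∀ (W' : ∀ k : Fin (n + 2), Submodule ℂ (W k)),
      (∀ (c : Fin (n + 2) → ℂ) (k : Fin (n + 1)),
        (W' k.castSucc).map (raise c k) ≤ W' k.succ ∧
        (W' k.succ).map (lower c k) ≤ W' k.castSucc) →
      W' 0 = ⊤ → ∀ k, W' k = ⊤) :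
    -- `W` is simple …
    (∀ (W' : ∀ k : Fin (n + 2), Submodule ℂ (W k)),
      (∀ (c : Fin (n + 2) → ℂ) (k : Fin (n + 1)),
        (W' k.castSucc).map (raise c k) ≤ W' k.succ ∧
        (W' k.succ).map (lower c k) ≤ W' k.castSucc) →
      (∀ k, W' k = ⊥) ∨ (∀ k, W' k = ⊤)) ↔
    -- … iff `W` is generated by its last component `W_{N−1}`
    (∀ (W' : ∀ k : Fin (n + 2), Submodule ℂ (W k)),
      (∀ (c : Fin (n + 2) → ℂ) (k : Fin (n + 1)),
        (W' k.castSucc).map (raise c k) ≤ W' k.succ ∧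
        (W' k.succ).map (lower c k) ≤ W' k.castSucc) →
      W' (Fin.last (n + 1)) = ⊤ → ∀ k, W' k = ⊤) :=
  simple_iff_generated_by_last_component_general n W raise lower hdim hgen
end

section
/- Let N ≥ 2, V = ℂ^N, and let W be a representation of the double Beilinson quiver with relations over ℂ in which each W_k is one-dimensional, W₀ = ℂ, and W is generated by W₀. Then every nonzero subrepresentation W' of W satisfies W'_{N−1} = W_{N−1}; that is, if some component W'_k of W' is nonzero, then the last component of W' equals the last component of W. -/
/-!
A subrepresentation that is nonzero in some degree `k` is everything there, since each `W_k` is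
simple. Every raising step `W_m → W_{m+1}` has a nonzero, hence surjective, map: otherwise
`W_0 ⊕ ⋯ ⊕ W_m` would be a proper subrepresentation containing `W_0`. So the subrepresentation
is everything in all degrees `≥ k`, in particular in the last one.
-/

theorem Fin.forall_le_imp_of_succ {n : ℕ} {P : Fin (n + 1) → Prop} {k : Fin (n + 1)} (hk : P k)
    (hsucc : ∀ i : Fin n, P i.castSucc → P i.succ) : ∀ j, k ≤ j → P j := by
  intro j
  induction j using Fin.induction with
  | zero => intro h; rwa [Fin.le_zero_iff.mp h] at hk
  | succ i ih =>
    intro h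
    rcases h.lt_or_eq with h | rfl
    · exact hsucc i (ih (Fin.le_castSucc_iff.mpr h))
    · exact hk

namespace Ladder

variable {R C : Type*} [Ring R] {n : ℕ} {W : Fin (n + 2) → Type*}
  [∀ k, AddCommGroup (W k)] [∀ k, Module R (W k)]
  (raise : C → ∀ k : Fin (n + 1), W k.castSucc →ₗ[R] W k.succ)
  (lower : C → ∀ k : Fin (n + 1), W k.succ →ₗ[R] W k.castSucc)

def IsSubrep (W' : ∀ k, Submodule R (W k)) : Prop :=
  ∀ c k, (W' k.castSucc).map (raise c k) ≤ W' k.succ ∧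
    (W' k.succ).map (lower c k) ≤ W' k.castSucc

def IsGeneratedByZero : Prop :=
  ∀ W' : ∀ k, Submodule R (W k), IsSubrep raise lower W' → W' 0 = ⊤ → ∀ k, W' k = ⊤

def truncation (m : Fin (n + 1)) (k : Fin (n + 2)) : Submodule R (W k) :=
  if (k : ℕ) ≤ m then ⊤ else ⊥

variable {raise lower}

theorem isSubrep_truncation {m : Fin (n + 1)} (h : ∀ c, raise c m = 0) :
    IsSubrep raise lower (truncation (W := W) m) := by
  intro c j
  simp only [truncation, Fin.val_castSucc, Fin.val_succ]
  constructor
  · by_cases hj : (j : ℕ) ≤ m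
    · by_cases hj' : (j : ℕ) + 1 ≤ m
      · simp [hj']
      · obtain rfl : j = m := Fin.ext (by omega)
        simp [h c]
    · simp [hj]
  · by_cases hj : (j : ℕ) + 1 ≤ m
    · simp [show (j : ℕ) ≤ m by omega]
    · simp [hj]

theorem exists_raise_ne_zero (hgen : IsGeneratedByZero raise lower) (m : Fin (n + 1))
    [Nontrivial (W m.succ)] : ∃ c, raise c m ≠ 0 := by
  by_contra! h
  have htop := hgen _ (isSubrep_truncation h) (by simp [truncation]) m.succ
  simp [truncation] at htop

theorem IsSubrep.eq_top_succ {W' : ∀ k, Submodule R (W k)} (hW' : IsSubrep raise lower W')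
    {m : Fin (n + 1)} (hm : W' m.castSucc = ⊤) {c : C} (hc : Function.Surjective (raise c m)) :
    W' m.succ = ⊤ := by
  have := (hW' c m).1
  rwa [hm, Submodule.map_top, LinearMap.range_eq_top.mpr hc, top_le_iff] at this

theorem IsSubrep.eq_top_of_le [∀ k, IsSimpleModule R (W k)] (hgen : IsGeneratedByZero raise lower)
    {W' : ∀ k, Submodule R (W k)} (hW' : IsSubrep raise lower W') {k : Fin (n + 2)}
    (hk : W' k = ⊤) : ∀ j, k ≤ j → W' j = ⊤ :=
  Fin.forall_le_imp_of_succ hk fun m hm ↦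
    have := IsSimpleModule.nontrivial R (W m.succ)
    have ⟨_, hc⟩ := exists_raise_ne_zero hgen m
    hW'.eq_top_succ hm (LinearMap.surjective_of_ne_zero hc)

end Ladder

theorem nonzero_subrep_has_full_last_component_general
    (n : ℕ)
    (W : Fin (n + 2) → Type*) [∀ k, AddCommGroup (W k)] [∀ k, Module ℂ (W k)]
    (raise : (Fin (n + 2) → ℂ) → ∀ k : Fin (n + 1), W k.castSucc →ₗ[ℂ] W k.succ)
    (lower : (Fin (n + 2) → ℂ) → ∀ k : Fin (n + 1), W k.succ →ₗ[ℂ] W k.castSucc)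
    (hdim : ∀ k, Module.finrank ℂ (W k) = 1)
    (hgen : ∀ (W' : ∀ k : Fin (n + 2), Submodule ℂ (W k)),
      (∀ (c : Fin (n + 2) → ℂ) (k : Fin (n + 1)),
        (W' k.castSucc).map (raise c k) ≤ W' k.succ ∧
        (W' k.succ).map (lower c k) ≤ W' k.castSucc) →
      W' 0 = ⊤ → ∀ k, W' k = ⊤) :
    ∀ (W' : ∀ k : Fin (n + 2), Submodule ℂ (W k)),
      (∀ (c : Fin (n + 2) → ℂ) (k : Fin (n + 1)),
        (W' k.castSucc).map (raise c k) ≤ W' k.succ ∧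
        (W' k.succ).map (lower c k) ≤ W' k.castSucc) →
      (∃ k, W' k ≠ ⊥) → W' (Fin.last (n + 1)) = ⊤ := by
  rintro W' hW' ⟨k, hk⟩
  have (k : Fin (n + 2)) : IsSimpleModule ℂ (W k) := isSimpleModule_iff_finrank_eq_one.mpr (hdim k)
  have hk_top : W' k = ⊤ := (eq_bot_or_eq_top (W' k)).resolve_left hk
  exact Ladder.IsSubrep.eq_top_of_le (lower := lower) hgen hW' hk_top _ (Fin.le_last k)

/-- `N = n + 2 ≥ 2`, `V = ℂ^N`.  Let `W` be a representation of the
double Beilinson quiver with relations over `ℂ` (raising maps for `f ∈ V^*`, lowering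
maps for `v ∈ V`, `ℂ`-linear in `f` resp. `v`, satisfying the commutation, mixed and
`∑ fᵢvᵢ = 0 = ∑ vᵢfᵢ` relations) in which each `W_k` is one-dimensional, `W₀ = ℂ` and `W`
is generated by `W₀`.  Then every nonzero subrepresentation `W'` of `W` satisfies
`W'_{N−1} = W_{N−1}`: if some component of `W'` is nonzero then its last component is all
of `W_{N−1}`. -/
theorem nonzero_subrep_has_full_last_component
    (n : ℕ)
    (W : Fin (n + 2) → Type*) [∀ k, AddCommGroup (W k)] [∀ k, Module ℂ (W k)]
    (raise : (Fin (n + 2) → ℂ) → ∀ k : Fin (n + 1), W k.castSucc →ₗ[ℂ] W k.succ)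
    (lower : (Fin (n + 2) → ℂ) → ∀ k : Fin (n + 1), W k.succ →ₗ[ℂ] W k.castSucc)
    (raise_add : ∀ c c' k, raise (c + c') k = raise c k + raise c' k)
    (raise_smul : ∀ (t : ℂ) c k, raise (t • c) k = t • raise c k)
    (lower_add : ∀ c c' k, lower (c + c') k = lower c k + lower c' k)
    (lower_smul : ∀ (t : ℂ) c k, lower (t • c) k = t • lower c k)
    (raise_comm : ∀ c c' (k : Fin n),
      (raise c' k.succ).comp (raise c k.castSucc) = (raise c k.succ).comp (raise c' k.castSucc))
    (lower_comm : ∀ c c' (k : Fin n),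
      (lower c' k.castSucc).comp (lower c k.succ) = (lower c k.castSucc).comp (lower c' k.succ))
    (mixed_comm : ∀ c c' (k : Fin n),
      (raise c k.castSucc).comp (lower c' k.castSucc) = (lower c' k.succ).comp (raise c k.succ))
    (sum_fv : ∀ k : Fin (n + 1),
      ∑ i, (raise (Pi.single i 1) k).comp (lower (Pi.single i 1) k) = 0)
    (sum_vf : ∀ k : Fin (n + 1),
      ∑ i, (lower (Pi.single i 1) k).comp (raise (Pi.single i 1) k) = 0)
    (hdim : ∀ k, Module.finrank ℂ (W k) = 1)
    (hW0 : Nonempty (W 0 ≃ₗ[ℂ] ℂ))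
    (hgen : ∀ (W' : ∀ k : Fin (n + 2), Submodule ℂ (W k)),
      (∀ (c : Fin (n + 2) → ℂ) (k : Fin (n + 1)),
        (W' k.castSucc).map (raise c k) ≤ W' k.succ ∧
        (W' k.succ).map (lower c k) ≤ W' k.castSucc) →
      W' 0 = ⊤ → ∀ k, W' k = ⊤) :
    ∀ (W' : ∀ k : Fin (n + 2), Submodule ℂ (W k)),
      (∀ (c : Fin (n + 2) → ℂ) (k : Fin (n + 1)),
        (W' k.castSucc).map (raise c k) ≤ W' k.succ ∧
        (W' k.succ).map (lower c k) ≤ W' k.castSucc) →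
      (∃ k, W' k ≠ ⊥) → W' (Fin.last (n + 1)) = ⊤ :=
  nonzero_subrep_has_full_last_component_general n W raise lower hdim hgen
end

section
/- Let N ≥ 2, V = ℂ^N, let P be a one-dimensional ℂ-vector space, α : P → V an injective linear map, and β : P^∨ → V* a linear map with α^∨ ∘ β = 0, and set X := α ∘ β^∨ ∈ End_ℂ(V). Then X² = 0 and rank X ≤ 1; moreover rank X = 1 (equivalently X ≠ 0, equivalently X lies in B(1), the locus lying over the nonsingular part of the closure of B(1)) if and only if the associated representation W_{αβ} of the double Beilinson quiver with relations over ℂ is simple. -/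
open PiTensorProduct

/-- The map `β^∨ : V → P` dual to `β : P^∨ → V^*` (using that the finite-dimensional
space `P` is reflexive); it is characterized by `u (β^∨ x) = ∑ j, β u j * x j`. -/
noncomputable def betaVee (n : ℕ) (P : Type*) [AddCommGroup P] [Module ℂ P]
    [FiniteDimensional ℂ P] (β : Module.Dual ℂ P →ₗ[ℂ] (Fin (n + 2) → ℂ)) :
    (Fin (n + 2) → ℂ) →ₗ[ℂ] P :=
  (Module.evalEquiv ℂ P).symm.toLinearMap ∘ₗ β.dualMap ∘ₗ
    (Pi.basisFun ℂ (Fin (n + 2))).toDual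

/-!
Since `P` is a line, so is every `Sym^k P^∨`, and a linear map between lines is zero or onto.
Hence a subrepresentation is `0` or everything at each level, and the chain is simple unless some
raising or lowering step vanishes for all arrows, in which case truncating the chain at that step
gives a proper subrepresentation. Raising by `f` vanishes iff `α^∨ f = 0` and lowering by `v`
iff `β^∨ v = 0`, so `W_{αβ}` is simple iff `α ≠ 0` and `β ≠ 0`, i.e. iff `X = α ∘ β^∨ ≠ 0` as `X`
factors through the line `P`. This factorisation also gives `rank X ≤ 1`, and `X² = 0` because
`β^∨ ∘ α = (α^∨ ∘ β)^∨ = 0`.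
-/

section SymPowGeneral

variable {A : Type*} [CommRing A] {M : Type*} [AddCommGroup M] [Module A M] {k : ℕ}

theorem SymPow.hom_ext_s13 {N : Type*} [AddCommGroup N] [Module A N] {f g : SymPow A M k →ₗ[A] N}
    (h : ∀ m, f (mkSym A m) = g (mkSym A m)) : f = g :=
  Submodule.linearMap_qext _ (PiTensorProduct.ext (MultilinearMap.ext h))

theorem mkSym_eq_zero_of_eq_zero {m : Fin k → M} (i : Fin k) (hi : m i = 0) : mkSym A m = 0 := by
  rw [mkSym, MultilinearMap.map_coord_zero _ i hi, map_zero]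

theorem mkSym_smul_univ (a : Fin k → A) (m : Fin k → M) :
    mkSym A (fun i => a i • m i) = (∏ i, a i) • mkSym A m := by
  rw [mkSym, MultilinearMap.map_smul_univ, map_smul, mkSym]

theorem span_range_mkSym : Submodule.span A (Set.range fun m : Fin k → M => mkSym A m) = ⊤ := by
  rw [show (fun m : Fin k → M => mkSym A m) = (symRel A M k).mkQ ∘ tprod A from rfl,
    Set.range_comp, ← Submodule.map_span, span_tprod_eq_top, Submodule.map_top,
    Submodule.range_mkQ]

noncomputable def symPowProd (φ : Module.Dual A M) (k : ℕ) : Module.Dual A (SymPow A M k) :=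
  (symRel A M k).liftQ
    (lift ((MultilinearMap.mkPiAlgebra A (Fin k) A).compLinearMap fun _ => φ)) <| by
    rw [symRel, Submodule.span_le]
    rintro _ ⟨m, σ, rfl⟩
    simpa [sub_eq_zero] using (Equiv.prod_comp σ fun i => φ (m i)).symm

theorem symPowProd_mkSym (φ : Module.Dual A M) (m : Fin k → M) :
    symPowProd φ k (mkSym A m) = ∏ i, φ (m i) := by
  simp [symPowProd, mkSym]

end SymPowGeneral

section SymPowField

variable {K : Type*} [Field K] {M : Type*} [AddCommGroup M] [Module K M]

theorem mkSym_const_ne_zero {x : M} (hx : x ≠ 0) (k : ℕ) : mkSym K (fun _ : Fin k => x) ≠ 0 := by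
  obtain ⟨φ, hφ⟩ : ∃ φ : Module.Dual K M, φ x ≠ 0 := by
    by_contra! h
    exact hx ((Module.forall_dual_apply_eq_zero_iff K x).mp h)
  intro h0
  have := congrArg (symPowProd φ k) h0
  rw [symPowProd_mkSym, map_zero, Finset.prod_const] at this
  exact pow_ne_zero _ hφ this

theorem finrank_symPow_eq_one (hM : Module.finrank K M = 1) (k : ℕ) :
    Module.finrank K (SymPow K M k) = 1 := by
  obtain ⟨e, he, hspan⟩ := finrank_eq_one_iff'.mp hM
  rw [finrank_eq_one_iff_of_nonzero' _ (mkSym_const_ne_zero he k)]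
  have hmem : ∀ m : Fin k → M, mkSym K m ∈ K ∙ mkSym K (fun _ : Fin k => e) := by
    intro m
    choose a ha using fun i => hspan (m i)
    rw [show m = fun i => a i • e from funext fun i => (ha i).symm, mkSym_smul_univ]
    exact Submodule.smul_mem _ _ (Submodule.mem_span_singleton_self _)
  have htop : (K ∙ mkSym K (fun _ : Fin k => e)) = ⊤ := by
    rw [eq_top_iff, ← span_range_mkSym, Submodule.span_le]
    exact Set.range_subset_iff.mpr hmem
  exact fun w => Submodule.mem_span_singleton.mp (htop ▸ Submodule.mem_top)

theorem eq_zero_iff_of_apply_mkSym_eq_mkSym_cons {k : ℕ}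
    {f : SymPow K M k →ₗ[K] SymPow K M (k + 1)} {x : M}
    (hf : ∀ u, f (mkSym K u) = mkSym K (Fin.cons x u)) : f = 0 ↔ x = 0 := by
  refine ⟨fun h0 => by_contra fun hx => mkSym_const_ne_zero (K := K) hx (k + 1) ?_, fun hx => ?_⟩
  · rw [← Fin.cons_self_tail (fun _ : Fin (k + 1) => x)]
    exact (hf _).symm.trans (by rw [h0, LinearMap.zero_apply])
  · exact SymPow.hom_ext_s13 fun u => by
      rw [hf, LinearMap.zero_apply,
        mkSym_eq_zero_of_eq_zero (m := Fin.cons x u) 0 (by rw [Fin.cons_zero, hx])]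

theorem eq_zero_iff_of_apply_mkSym_eq_smul_mkSym_tail {k : ℕ}
    {f : SymPow K M (k + 1) →ₗ[K] SymPow K M k} {ψ : Module.Dual K M}
    (hf : ∀ u, f (mkSym K u) = ψ (u 0) • mkSym K (u ∘ Fin.succ)) : f = 0 ↔ ψ = 0 := by
  refine ⟨fun h0 => LinearMap.ext fun x => ?_, fun hψ => SymPow.hom_ext_s13 fun u => by simp [hf, hψ]⟩
  by_contra hψx
  have hx : x ≠ 0 := by rintro rfl; exact hψx (map_zero ψ)
  have := hf fun _ => x
  rw [h0, LinearMap.zero_apply, eq_comm, smul_eq_zero] at this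
  exact this.elim hψx (mkSym_const_ne_zero hx k)

end SymPowField

theorem LinearMap.range_eq_top_of_ne_zero_of_finrank_eq_one {K V W : Type*} [Field K]
    [AddCommGroup V] [Module K V] [AddCommGroup W] [Module K W]
    (hW : Module.finrank K W = 1) {f : V →ₗ[K] W} (hf : f ≠ 0) : LinearMap.range f = ⊤ :=
  have := isSimpleModule_iff_finrank_eq_one.mpr hW
  (eq_bot_or_eq_top _).resolve_left (LinearMap.range_eq_bot.not.mpr hf)

section Chain

variable {K : Type*} [Field K] {V : ℕ → Type*} [∀ k, AddCommGroup (V k)] [∀ k, Module K (V k)]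
  {n : ℕ} {ι : Type*}
  (raise : ι → ∀ k : Fin (n + 1), V k →ₗ[K] V (k + 1))
  (lower : ι → ∀ k : Fin (n + 1), V (k + 1) →ₗ[K] V k)

def IsSubrep (W : ∀ k : Fin (n + 2), Submodule K (V k)) : Prop :=
  ∀ c k, (W k.castSucc).map (raise c k) ≤ W k.succ ∧ (W k.succ).map (lower c k) ≤ W k.castSucc

def IsSimpleRep : Prop :=
  ∀ W, IsSubrep raise lower W → (∀ k, W k = ⊥) ∨ (∀ k, W k = ⊤)

variable {raise lower}

theorem IsSubrep.eq_top_iff_succ {W : ∀ k : Fin (n + 2), Submodule K (V k)}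
    (hW : IsSubrep raise lower W) (hV : ∀ k, Module.finrank K (V k) = 1) {k : Fin (n + 1)}
    (hr : ∃ c, raise c k ≠ 0) (hl : ∃ c, lower c k ≠ 0) : W k.castSucc = ⊤ ↔ W k.succ = ⊤ := by
  obtain ⟨c, hc⟩ := hr
  obtain ⟨d, hd⟩ := hl
  constructor
  · intro htop
    have := (hW c k).1
    rwa [htop, Submodule.map_top, LinearMap.range_eq_top_of_ne_zero_of_finrank_eq_one (hV _) hc,
      top_le_iff] at this
  · intro htop
    have := (hW d k).2
    rwa [htop, Submodule.map_top, LinearMap.range_eq_top_of_ne_zero_of_finrank_eq_one (hV _) hd,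
      top_le_iff] at this

theorem isSimpleRep_of_ne_zero (hV : ∀ k, Module.finrank K (V k) = 1)
    (hr : ∀ k, ∃ c, raise c k ≠ 0) (hl : ∀ k, ∃ c, lower c k ≠ 0) :
    IsSimpleRep raise lower := by
  intro W hW
  have htop : ∀ k, W k = ⊤ ↔ W 0 = ⊤ := by
    intro k
    induction k using Fin.induction with
    | zero => rfl
    | succ k ih => exact (hW.eq_top_iff_succ hV (hr k) (hl k)).symm.trans ih
  by_cases h0 : W 0 = ⊤
  · exact Or.inr fun k => (htop k).mpr h0
  · refine Or.inl fun k => ?_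
    have := isSimpleModule_iff_finrank_eq_one.mpr (hV k)
    exact (eq_bot_or_eq_top (W k)).resolve_right (mt (htop k).mp h0)

theorem not_isSimpleRep_of_raise_eq_zero [∀ k, Nontrivial (V k)] {k : Fin (n + 1)}
    (hk : ∀ c, raise c k = 0) : ¬ IsSimpleRep raise lower := by
  intro hsimple
  -- nothing leaves level `k` upwards, so the levels `≤ k` form a subrepresentation
  have hW : IsSubrep raise lower fun j => if j ≤ k.castSucc then ⊤ else ⊥ := by
    intro c j
    simp only [Fin.succ_le_castSucc_iff, Fin.castSucc_le_castSucc_iff]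
    refine ⟨?_, ?_⟩
    · rcases lt_trichotomy j k with h | rfl | h
      · simp [h]
      · simp [hk]
      · simp [not_le.mpr h]
    · by_cases h : j ≤ k
      · simp [h]
      · simp [h, lt_asymm (not_le.mp h)]
  rcases hsimple _ hW with h | h
  · have h0 := h 0
    simp only [Fin.zero_le, if_true] at h0
    exact top_ne_bot h0
  · have hk := h k.succ
    simp only [Fin.succ_le_castSucc_iff, lt_irrefl, if_false] at hk
    exact bot_ne_top hk

theorem not_isSimpleRep_of_lower_eq_zero [∀ k, Nontrivial (V k)] {k : Fin (n + 1)}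
    (hk : ∀ c, lower c k = 0) : ¬ IsSimpleRep raise lower := by
  intro hsimple
  -- nothing leaves level `k + 1` downwards, so the levels `> k` form a subrepresentation
  have hW : IsSubrep raise lower fun j => if j ≤ k.castSucc then ⊥ else ⊤ := by
    intro c j
    simp only [Fin.succ_le_castSucc_iff, Fin.castSucc_le_castSucc_iff]
    refine ⟨?_, ?_⟩
    · by_cases h : j < k
      · simp [h, h.le]
      · simp [h]
    · rcases lt_trichotomy j k with h | rfl | h
      · simp [h, h.le]
      · simp [hk]
      · simp [not_le.mpr h]
  rcases hsimple _ hW with h | h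
  · have hk := h k.succ
    simp only [Fin.succ_le_castSucc_iff, lt_irrefl, if_false] at hk
    exact top_ne_bot hk
  · have h0 := h 0
    simp only [Fin.zero_le, if_true] at h0
    exact bot_ne_top h0

theorem isSimpleRep_iff (hV : ∀ k, Module.finrank K (V k) = 1) :
    IsSimpleRep raise lower ↔ (∀ k, ∃ c, raise c k ≠ 0) ∧ (∀ k, ∃ c, lower c k ≠ 0) := by
  have (k : ℕ) : Nontrivial (V k) := Module.nontrivial_of_finrank_eq_succ (hV k)
  refine ⟨fun h => ⟨fun k => ?_, fun k => ?_⟩, fun h => isSimpleRep_of_ne_zero hV h.1 h.2⟩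
  · by_contra! hk
    exact not_isSimpleRep_of_raise_eq_zero hk h
  · by_contra! hk
    exact not_isSimpleRep_of_lower_eq_zero hk h

end Chain

section Rank

variable {K M P Q : Type*} [Field K] [AddCommGroup M] [Module K M] [AddCommGroup P] [Module K P]
  [AddCommGroup Q] [Module K Q]

theorem LinearMap.comp_eq_zero_iff_of_finrank_eq_one (hP : Module.finrank K P = 1)
    (f : M →ₗ[K] P) (g : P →ₗ[K] Q) : g ∘ₗ f = 0 ↔ g = 0 ∨ f = 0 := by
  refine ⟨fun h => or_iff_not_imp_right.mpr fun hf => ?_, ?_⟩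
  · have hrange : LinearMap.range (g ∘ₗ f) = LinearMap.range g := by
      rw [LinearMap.range_comp, LinearMap.range_eq_top_of_ne_zero_of_finrank_eq_one hP hf,
        Submodule.map_top]
    rw [h, LinearMap.range_zero, eq_comm, LinearMap.range_eq_bot] at hrange
    exact hrange
  · rintro (rfl | rfl) <;> simp

theorem LinearMap.rank_comp_le_one_of_finrank_eq_one [FiniteDimensional K P]
    (hP : Module.finrank K P = 1) (f : M →ₗ[K] P) (g : P →ₗ[K] Q) : (g ∘ₗ f).rank ≤ 1 :=
  calc (g ∘ₗ f).rank ≤ g.rank := LinearMap.rank_comp_le_left f g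
    _ = Module.finrank K (LinearMap.range g) := (Module.finrank_eq_rank _ _).symm
    _ ≤ 1 := by exact_mod_cast hP ▸ g.finrank_range_le

theorem LinearMap.rank_eq_one_iff_ne_zero {f : M →ₗ[K] Q} (hf : f.rank ≤ 1) :
    f.rank = 1 ↔ f ≠ 0 := by
  rw [Ne, ← LinearMap.range_eq_bot, ← Submodule.rank_eq_zero]
  exact ⟨fun h h0 => one_ne_zero (h.symm.trans h0),
    fun h => hf.antisymm (Cardinal.one_le_iff_ne_zero.mpr h)⟩

end Rank

theorem exists_sum_smul_proj_comp_ne_zero_iff {K M ι : Type*} [Field K] [AddCommGroup M]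
    [Module K M] [Fintype ι] (g : M →ₗ[K] (ι → K)) :
    (∃ c : ι → K, ∑ i, c i • (LinearMap.proj i ∘ₗ g) ≠ 0) ↔ g ≠ 0 := by
  classical
  refine ⟨fun ⟨c, hc⟩ hg => hc (by simp [hg]), fun hg => ?_⟩
  obtain ⟨x, hx⟩ := DFunLike.ne_iff.mp hg
  obtain ⟨i, hi⟩ := Function.ne_iff.mp hx
  refine ⟨Pi.single i 1, DFunLike.ne_iff.mpr ⟨x, ?_⟩⟩
  simpa [Pi.single_apply] using hi

section BetaVee

variable {n : ℕ} {P : Type*} [AddCommGroup P] [Module ℂ P] [FiniteDimensional ℂ P]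
  {β : Module.Dual ℂ P →ₗ[ℂ] (Fin (n + 2) → ℂ)}

theorem apply_betaVee (u : Module.Dual ℂ P) (x : Fin (n + 2) → ℂ) :
    u (betaVee n P β x) = ∑ i, β u i * x i := by
  rw [betaVee, LinearMap.comp_apply, LinearMap.comp_apply, LinearEquiv.coe_coe,
    Module.apply_evalEquiv_symm_apply, LinearMap.dualMap_apply]
  conv_lhs => rw [← (Pi.basisFun ℂ (Fin (n + 2))).sum_repr (β u)]
  simp only [map_sum, map_smul, Module.Basis.toDual_apply_left, Pi.basisFun_repr, smul_eq_mul]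

theorem betaVee_eq_zero_iff : betaVee n P β = 0 ↔ β = 0 := by
  refine ⟨fun h => LinearMap.ext fun u => funext fun i => ?_, fun h => LinearMap.ext fun x => ?_⟩
  · simpa [h, Pi.single_apply] using (apply_betaVee (β := β) u (Pi.single i 1)).symm
  · exact (Module.forall_dual_apply_eq_zero_iff ℂ _).mp fun u => by simp [apply_betaVee, h]

theorem betaVee_comp_eq_zero {Q : Type*} [AddCommGroup Q] [Module ℂ Q]
    {α : Q →ₗ[ℂ] (Fin (n + 2) → ℂ)} (h : ∀ u q, ∑ i, β u i * α q i = 0) :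
    betaVee n P β ∘ₗ α = 0 :=
  LinearMap.ext fun q => (Module.forall_dual_apply_eq_zero_iff ℂ _).mp fun u => by
    rw [LinearMap.comp_apply, apply_betaVee, h]

end BetaVee

theorem X_in_B1_iff_W_alpha_beta_simple_general
    (n : ℕ)
    (P : Type*) [AddCommGroup P] [Module ℂ P] [FiniteDimensional ℂ P]
    (hP : Module.finrank ℂ P = 1)
    (α : P →ₗ[ℂ] (Fin (n + 2) → ℂ))
    (β : Module.Dual ℂ P →ₗ[ℂ] (Fin (n + 2) → ℂ))
    (hβ : ∀ (u : Module.Dual ℂ P) (p : P), ∑ i, β u i * α p i = 0)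
    (raise : (Fin (n + 2) → ℂ) → ∀ k : Fin (n + 1),
      SymPow ℂ (Module.Dual ℂ P) k.val →ₗ[ℂ] SymPow ℂ (Module.Dual ℂ P) (k.val + 1))
    (hraise : ∀ (c : Fin (n + 2) → ℂ) (k : Fin (n + 1)) (u : Fin k.val → Module.Dual ℂ P),
      raise c k (mkSym ℂ u) =
        mkSym ℂ (Fin.cons (∑ i, c i • ((LinearMap.proj i).comp α)) u))
    (lower : (Fin (n + 2) → ℂ) → ∀ k : Fin (n + 1),
      SymPow ℂ (Module.Dual ℂ P) (k.val + 1) →ₗ[ℂ] SymPow ℂ (Module.Dual ℂ P) k.val)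
    (hlower : ∀ (c : Fin (n + 2) → ℂ) (k : Fin (n + 1))
        (u : Fin (k.val + 1) → Module.Dual ℂ P),
      lower c k (mkSym ℂ u) = (∑ j, c j * β (u 0) j) • mkSym ℂ (u ∘ Fin.succ)) :
    (α ∘ₗ betaVee n P β).comp (α ∘ₗ betaVee n P β) = 0 ∧
    LinearMap.rank (α ∘ₗ betaVee n P β) ≤ 1 ∧
    (LinearMap.rank (α ∘ₗ betaVee n P β) = 1 ↔
      (∀ (W' : ∀ k : Fin (n + 2), Submodule ℂ (SymPow ℂ (Module.Dual ℂ P) k.val)),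
        (∀ (c : Fin (n + 2) → ℂ) (k : Fin (n + 1)),
          (W' k.castSucc).map (raise c k) ≤ W' k.succ ∧
          (W' k.succ).map (lower c k) ≤ W' k.castSucc) →
        (∀ k, W' k = ⊥) ∨ (∀ k, W' k = ⊤))) ∧
    (α ∘ₗ betaVee n P β ≠ 0 ↔
      (∀ (W' : ∀ k : Fin (n + 2), Submodule ℂ (SymPow ℂ (Module.Dual ℂ P) k.val)),
        (∀ (c : Fin (n + 2) → ℂ) (k : Fin (n + 1)),
          (W' k.castSucc).map (raise c k) ≤ W' k.succ ∧
          (W' k.succ).map (lower c k) ≤ W' k.castSucc) →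
        (∀ k, W' k = ⊥) ∨ (∀ k, W' k = ⊤))) := by
  have hM : Module.finrank ℂ (Module.Dual ℂ P) = 1 := Subspace.dual_finrank_eq.trans hP
  have hraise' : ∀ c k, raise c k = 0 ↔ ∑ i, c i • (LinearMap.proj i ∘ₗ α) = 0 :=
    fun c k => eq_zero_iff_of_apply_mkSym_eq_mkSym_cons (hraise c k)
  have hlower' : ∀ c k, lower c k = 0 ↔ ∑ j, c j • (LinearMap.proj j ∘ₗ β) = 0 :=
    fun c k => eq_zero_iff_of_apply_mkSym_eq_smul_mkSym_tail fun u => by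
      simp [hlower, LinearMap.sum_apply]
  have hsimple : IsSimpleRep (V := fun k => SymPow ℂ (Module.Dual ℂ P) k) raise lower ↔
      α ≠ 0 ∧ β ≠ 0 := by
    rw [isSimpleRep_iff fun k => finrank_symPow_eq_one hM k,
      ← exists_sum_smul_proj_comp_ne_zero_iff, ← exists_sum_smul_proj_comp_ne_zero_iff]
    simp only [Ne, hraise', hlower', forall_const]
  have hX : α ∘ₗ betaVee n P β ≠ 0 ↔ α ≠ 0 ∧ β ≠ 0 := by
    rw [Ne, LinearMap.comp_eq_zero_iff_of_finrank_eq_one hP, betaVee_eq_zero_iff, not_or]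
  have hrank := LinearMap.rank_comp_le_one_of_finrank_eq_one hP (betaVee n P β) α
  have hXsimple := hX.trans hsimple.symm
  refine ⟨?_, hrank, (LinearMap.rank_eq_one_iff_ne_zero hrank).trans hXsimple, hXsimple⟩
  rw [LinearMap.comp_assoc, ← LinearMap.comp_assoc (betaVee n P β) α, betaVee_comp_eq_zero hβ,
    LinearMap.zero_comp, LinearMap.comp_zero]

/-- `N = n + 2 ≥ 2`, `V = ℂ^N`; `P` is a one-dimensional `ℂ`-vector
space, `α : P → V` injective linear, `β : P^∨ → V^*` linear with `α^∨ ∘ β = 0`, and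
`X := α ∘ β^∨ ∈ End_ℂ(V)`.  Then `X² = 0` and `rank X ≤ 1`; moreover `rank X = 1`
(equivalently `X ≠ 0`, i.e. `X ∈ B(1)`) if and only if the representation `W_{αβ}` of the
double Beilinson quiver with relations (on `(W_{αβ})_k = Sym^k P^∨`, `f = ∑ cᵢfᵢ` acting by
`u¹⋯u^k ↦ α^∨(f)·u¹⋯u^k` and `v = ∑ cⱼvⱼ` acting by `u¹⋯u^k ↦ u¹(β^∨v)·u²⋯u^k`) is
simple. -/
theorem X_in_B1_iff_W_alpha_beta_simple
    (n : ℕ)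
    (P : Type*) [AddCommGroup P] [Module ℂ P] [FiniteDimensional ℂ P]
    (hP : Module.finrank ℂ P = 1)
    (α : P →ₗ[ℂ] (Fin (n + 2) → ℂ)) (hα : Function.Injective α)
    (β : Module.Dual ℂ P →ₗ[ℂ] (Fin (n + 2) → ℂ))
    (hβ : ∀ (u : Module.Dual ℂ P) (p : P), ∑ i, β u i * α p i = 0)
    (raise : (Fin (n + 2) → ℂ) → ∀ k : Fin (n + 1),
      SymPow ℂ (Module.Dual ℂ P) k.val →ₗ[ℂ] SymPow ℂ (Module.Dual ℂ P) (k.val + 1))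
    (hraise : ∀ (c : Fin (n + 2) → ℂ) (k : Fin (n + 1)) (u : Fin k.val → Module.Dual ℂ P),
      raise c k (mkSym ℂ u) =
        mkSym ℂ (Fin.cons (∑ i, c i • ((LinearMap.proj i).comp α)) u))
    (lower : (Fin (n + 2) → ℂ) → ∀ k : Fin (n + 1),
      SymPow ℂ (Module.Dual ℂ P) (k.val + 1) →ₗ[ℂ] SymPow ℂ (Module.Dual ℂ P) k.val)
    (hlower : ∀ (c : Fin (n + 2) → ℂ) (k : Fin (n + 1))
        (u : Fin (k.val + 1) → Module.Dual ℂ P),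
      lower c k (mkSym ℂ u) = (∑ j, c j * β (u 0) j) • mkSym ℂ (u ∘ Fin.succ)) :
    (α ∘ₗ betaVee n P β).comp (α ∘ₗ betaVee n P β) = 0 ∧
    LinearMap.rank (α ∘ₗ betaVee n P β) ≤ 1 ∧
    (LinearMap.rank (α ∘ₗ betaVee n P β) = 1 ↔
      (∀ (W' : ∀ k : Fin (n + 2), Submodule ℂ (SymPow ℂ (Module.Dual ℂ P) k.val)),
        (∀ (c : Fin (n + 2) → ℂ) (k : Fin (n + 1)),
          (W' k.castSucc).map (raise c k) ≤ W' k.succ ∧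
          (W' k.succ).map (lower c k) ≤ W' k.castSucc) →
        (∀ k, W' k = ⊥) ∨ (∀ k, W' k = ⊤))) ∧
    (α ∘ₗ betaVee n P β ≠ 0 ↔
      (∀ (W' : ∀ k : Fin (n + 2), Submodule ℂ (SymPow ℂ (Module.Dual ℂ P) k.val)),
        (∀ (c : Fin (n + 2) → ℂ) (k : Fin (n + 1)),
          (W' k.castSucc).map (raise c k) ≤ W' k.succ ∧
          (W' k.succ).map (lower c k) ≤ W' k.castSucc) →
        (∀ k, W' k = ⊥) ∨ (∀ k, W' k = ⊤))) :=
  X_in_B1_iff_W_alpha_beta_simple_general n P hP α β hβ raise hraise lower hlower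
end
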